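/- If Z has the extended skew-normal density f(z) = (1/Φ(τ)) · φ(z) · Φ(τ√(1+α²) + αz), then its moment generating function is M(t) = (1/Φ(τ)) · exp(t²/2) · Φ(τ + δt), where δ = α/√(1+α²). -/
import Mathlib


open MeasureTheory Real

noncomputable def phi (x : ℝ) : ℝ := (Real.sqrt (2 * Real.pi))⁻¹ * Real.exp (-x ^ 2 / 2)

noncomputable def Phi (x : ℝ) : ℝ := ∫ t in Set.Iic x, phi t

/-- ESN(0,1,α,τ) density -/
noncomputable def esnPdf (α τ z : ℝ) : ℝ :=
  (Phi τ)⁻¹ * phi z * Phi (τ * Real.sqrt (1 + α ^ 2) + α * z)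

open Set

lemma phi_nonneg (x : ℝ) : 0 ≤ phi x := by unfold phi; positivity

lemma continuous_phi : Continuous phi := by
  unfold phi; continuity

lemma integrable_phi : Integrable phi := by
  have h := (integrable_exp_neg_mul_sq (by norm_num : (0:ℝ) < 1/2)).const_mul
      (Real.sqrt (2 * Real.pi))⁻¹
  refine h.congr (Filter.Eventually.of_forall fun x => ?_)
  unfold phi; ring_nf

lemma integral_phi : ∫ x, phi x = 1 := by
  have h : ∫ x : ℝ, Real.exp (-(1/2 : ℝ) * x ^ 2) = Real.sqrt (π / (1/2)) :=
    integral_gaussian (1/2)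
  have h2 : ∫ x, phi x = (Real.sqrt (2 * π))⁻¹ * ∫ x : ℝ, Real.exp (-(1/2 : ℝ) * x ^ 2) := by
    rw [← integral_const_mul]
    congr 1 with x
    unfold phi; ring_nf
  rw [h2, h, show (π / (1/2) : ℝ) = 2 * π by ring,
    inv_mul_cancel₀ (Real.sqrt_ne_zero'.mpr (by positivity))]

lemma Phi_le_one (x : ℝ) : Phi x ≤ 1 := by
  rw [Phi, ← integral_phi]
  exact setIntegral_le_integral integrable_phi (Filter.Eventually.of_forall phi_nonneg)

lemma setIntegral_Iic_add_right (f : ℝ → ℝ) (a b : ℝ) :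
    ∫ w in Iic b, f (w + a) = ∫ v in Iic (b + a), f v := by
  rw [← integral_indicator measurableSet_Iic, ← integral_indicator measurableSet_Iic,
    ← integral_add_right_eq_self (fun v => (Iic (b + a)).indicator f v) a]
  congr 1 with w
  by_cases h : w ≤ b
  · rw [indicator_of_mem (mem_Iic.mpr h),
      indicator_of_mem (mem_Iic.mpr (by linarith))]
  · rw [indicator_of_notMem (by simpa using h),
      indicator_of_notMem (by simp only [mem_Iic]; push_neg at h ⊢; linarith)]

lemma setIntegral_Iic_div (f : ℝ → ℝ) {s : ℝ} (hs : 0 < s) (b : ℝ) :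
    ∫ w in Iic b, f (w / s) = s * ∫ x in Iic (b / s), f x := by
  rw [← integral_indicator measurableSet_Iic, ← integral_indicator measurableSet_Iic]
  have key : ∀ w, (Iic b).indicator (fun w => f (w / s)) w
      = (Iic (b / s)).indicator f (w / s) := by
    intro w
    by_cases h : w ≤ b
    · rw [indicator_of_mem (mem_Iic.mpr h),
        indicator_of_mem (mem_Iic.mpr (by gcongr))]
    · rw [indicator_of_notMem (by simpa using h),
        indicator_of_notMem (by simp only [mem_Iic]; push_neg at h ⊢; gcongr)]
  simp_rw [key]
  rw [MeasureTheory.Measure.integral_comp_div (fun x => (Iic (b / s)).indicator f x) s,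
    abs_of_pos hs, smul_eq_mul]

lemma integral_phi_mul_phi (c w : ℝ) :
    ∫ u : ℝ, phi u * phi (w + c * u) =
      (Real.sqrt (1 + c ^ 2))⁻¹ * phi (w / Real.sqrt (1 + c ^ 2)) := by
  have hs : (0:ℝ) < 1 + c ^ 2 := by positivity
  have h2π : (Real.sqrt (2 * π))⁻¹ * (Real.sqrt (2 * π))⁻¹ = (2 * π)⁻¹ := by
    rw [← mul_inv, Real.mul_self_sqrt (by positivity)]
  have key : ∀ u : ℝ, phi u * phi (w + c * u)
      = (2 * π)⁻¹ * Real.exp (-(w ^ 2 / (1 + c ^ 2)) / 2)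
        * Real.exp (-((1 + c ^ 2) / 2) * (u + c * w / (1 + c ^ 2)) ^ 2) := by
    intro u
    have hE : -u ^ 2 / 2 + -(w + c * u) ^ 2 / 2
        = -(w ^ 2 / (1 + c ^ 2)) / 2 + -((1 + c ^ 2) / 2) * (u + c * w / (1 + c ^ 2)) ^ 2 := by
      field_simp
      ring
    unfold phi
    rw [mul_mul_mul_comm, h2π, ← Real.exp_add, mul_assoc, ← Real.exp_add, hE]
  have h1 : ∫ u : ℝ, Real.exp (-((1 + c ^ 2) / 2) * (u + c * w / (1 + c ^ 2)) ^ 2)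
      = Real.sqrt (π / ((1 + c ^ 2) / 2)) := by
    have h2 := integral_add_right_eq_self (μ := volume)
      (fun u : ℝ => Real.exp (-((1 + c ^ 2) / 2) * u ^ 2)) (c * w / (1 + c ^ 2))
    rw [h2, integral_gaussian]
  calc ∫ u : ℝ, phi u * phi (w + c * u)
      = (2 * π)⁻¹ * Real.exp (-(w ^ 2 / (1 + c ^ 2)) / 2)
        * ∫ u : ℝ, Real.exp (-((1 + c ^ 2) / 2) * (u + c * w / (1 + c ^ 2)) ^ 2) := by
        simp_rw [key]; rw [integral_const_mul]
    _ = (Real.sqrt (1 + c ^ 2))⁻¹ * phi (w / Real.sqrt (1 + c ^ 2)) := by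
        rw [h1, show (π / ((1 + c ^ 2) / 2) : ℝ)
            = 2 * π / (1 + c ^ 2) by rw [div_div_eq_mul_div]; ring,
          Real.sqrt_div' (2 * π) hs.le]
        unfold phi
        rw [div_pow, Real.sq_sqrt hs.le]
        set q := Real.sqrt (2 * π) with hqdef
        have hq : q ≠ 0 := by rw [hqdef]; positivity
        have hs' : Real.sqrt (1 + c ^ 2) ≠ 0 := by positivity
        have hq2 : (2 * π : ℝ) = q * q := by
          rw [hqdef, Real.mul_self_sqrt (by positivity)]
        rw [hq2]
        field_simp

lemma Phi_eq_shift (c b u : ℝ) : Phi (b + c * u) = ∫ w in Iic b, phi (w + c * u) :=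
  (setIntegral_Iic_add_right phi (c * u) b).symm

lemma integral_phi_mul_Phi (b c : ℝ) :
    ∫ u : ℝ, phi u * Phi (b + c * u) = Phi (b / Real.sqrt (1 + c ^ 2)) := by
  have hs : (0:ℝ) < Real.sqrt (1 + c ^ 2) := Real.sqrt_pos.mpr (by positivity)
  have hcont : Continuous (fun p : ℝ × ℝ => phi p.1 * phi (p.2 + c * p.1)) :=
    (continuous_phi.comp continuous_fst).mul
      (continuous_phi.comp (continuous_snd.add (continuous_const.mul continuous_fst)))
  have hmeas : AEStronglyMeasurable (fun p : ℝ × ℝ => phi p.1 * phi (p.2 + c * p.1))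
      (volume.prod (volume.restrict (Iic b))) := hcont.aestronglyMeasurable
  have hint : Integrable (fun p : ℝ × ℝ => phi p.1 * phi (p.2 + c * p.1))
      (volume.prod (volume.restrict (Iic b))) := by
    rw [integrable_prod_iff hmeas]
    constructor
    · refine Filter.Eventually.of_forall fun u => ?_
      exact ((integrable_phi.comp_add_right (c * u)).const_mul (phi u)).restrict
    · refine Integrable.mono integrable_phi ((hmeas.norm).integral_prod_right') ?_
      refine Filter.Eventually.of_forall fun u => ?_
      have h1 : ∀ w, ‖phi u * phi (w + c * u)‖ = phi u * phi (w + c * u) := fun w =>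
        abs_of_nonneg (mul_nonneg (phi_nonneg u) (phi_nonneg _))
      rw [Real.norm_eq_abs, abs_of_nonneg]
      · rw [Real.norm_eq_abs, abs_of_nonneg (phi_nonneg u)]
        calc ∫ w in Iic b, ‖phi u * phi (w + c * u)‖
            = phi u * ∫ w in Iic b, phi (w + c * u) := by
              simp_rw [h1]; rw [integral_const_mul]
          _ ≤ phi u * 1 := by
              refine mul_le_mul_of_nonneg_left ?_ (phi_nonneg u)
              rw [← Phi_eq_shift]; exact Phi_le_one _
          _ = phi u := mul_one _
      · exact integral_nonneg fun w => norm_nonneg _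
  calc ∫ u : ℝ, phi u * Phi (b + c * u)
      = ∫ u : ℝ, ∫ w in Iic b, phi u * phi (w + c * u) := by
        congr 1 with u
        rw [Phi_eq_shift, integral_const_mul]
    _ = ∫ w in Iic b, ∫ u : ℝ, phi u * phi (w + c * u) := integral_integral_swap hint
    _ = ∫ w in Iic b, (Real.sqrt (1 + c ^ 2))⁻¹ * phi (w / Real.sqrt (1 + c ^ 2)) := by
        simp_rw [integral_phi_mul_phi]
    _ = Phi (b / Real.sqrt (1 + c ^ 2)) := by
        rw [integral_const_mul, setIntegral_Iic_div phi hs, ← mul_assoc,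
          inv_mul_cancel₀ hs.ne', one_mul, Phi]

theorem esn_mgf (α τ t : ℝ) :
    ∫ z : ℝ, Real.exp (t * z) * esnPdf α τ z =
      (Phi τ)⁻¹ * Real.exp (t ^ 2 / 2) * Phi (τ + (α / Real.sqrt (1 + α ^ 2)) * t) := by
  have hs : (0:ℝ) < Real.sqrt (1 + α ^ 2) := Real.sqrt_pos.mpr (by positivity)
  set a : ℝ := τ * Real.sqrt (1 + α ^ 2) with ha
  have key : ∀ z : ℝ, Real.exp (t * z) * esnPdf α τ z
      = (Phi τ)⁻¹ * Real.exp (t ^ 2 / 2) * (phi (z - t) * Phi (a + α * z)) := by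
    intro z
    have hexp : Real.exp (t * z) * phi z = Real.exp (t ^ 2 / 2) * phi (z - t) := by
      unfold phi
      rw [show Real.exp (t * z) * ((Real.sqrt (2 * π))⁻¹ * Real.exp (-z ^ 2 / 2))
          = (Real.sqrt (2 * π))⁻¹ * Real.exp (t * z + -z ^ 2 / 2) by
            rw [Real.exp_add]; ring,
        show Real.exp (t ^ 2 / 2) * ((Real.sqrt (2 * π))⁻¹ * Real.exp (-(z - t) ^ 2 / 2))
          = (Real.sqrt (2 * π))⁻¹ * Real.exp (t ^ 2 / 2 + -(z - t) ^ 2 / 2) by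
            rw [Real.exp_add]; ring]
      congr 1
      ring
    unfold esnPdf
    rw [← ha]
    calc Real.exp (t * z) * ((Phi τ)⁻¹ * phi z * Phi (a + α * z))
        = (Phi τ)⁻¹ * (Real.exp (t * z) * phi z) * Phi (a + α * z) := by ring
      _ = (Phi τ)⁻¹ * (Real.exp (t ^ 2 / 2) * phi (z - t)) * Phi (a + α * z) := by rw [hexp]
      _ = (Phi τ)⁻¹ * Real.exp (t ^ 2 / 2) * (phi (z - t) * Phi (a + α * z)) := by ring
  have hshift : ∫ z : ℝ, phi (z - t) * Phi (a + α * z)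
      = ∫ u : ℝ, phi u * Phi ((a + α * t) + α * u) := by
    have h := integral_add_right_eq_self (μ := volume)
      (fun z : ℝ => phi (z - t) * Phi (a + α * z)) t
    rw [← h]
    congr 1 with u
    rw [add_sub_cancel_right]
    ring_nf
  calc ∫ z : ℝ, Real.exp (t * z) * esnPdf α τ z
      = (Phi τ)⁻¹ * Real.exp (t ^ 2 / 2) * ∫ z : ℝ, phi (z - t) * Phi (a + α * z) := by
        simp_rw [key]; rw [integral_const_mul]
    _ = (Phi τ)⁻¹ * Real.exp (t ^ 2 / 2) * Phi ((a + α * t) / Real.sqrt (1 + α ^ 2)) := by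
        rw [hshift, integral_phi_mul_Phi]
    _ = (Phi τ)⁻¹ * Real.exp (t ^ 2 / 2) * Phi (τ + (α / Real.sqrt (1 + α ^ 2)) * t) := by
        congr 2
        rw [ha]
        field_simp
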